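/- Effect-inducing cases: for all words u, v, z over the alphabet {⟨, ⟩}: (i) if r(uv) ≤ ℓ(z), then ℓ((u⟩v)·z) = ℓ((uv)·z) + 1 and r((u⟩v)·z) = r((uv)·z); (ii) if r(z) > ℓ(uv), then ℓ(z·(u⟩v)) = ℓ(z·(uv)) and r(z·(u⟩v)) = r(z·(uv)) − 1. In both cases the effect of inserting a closing parenthesis on the concatenation is determined independently of its effect on the changed part. -/

import Mathlib

/-!
Over a single parenthesis type `μ_u(w)` is `⟩^ℓ(w) ⟨^r(w)`, so `(ℓ, r)` determines the reduction
and behaves under concatenation like a bicyclic monoid: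
`ℓ(wz) = ℓ(w) + (ℓ(z) ∸ r(w))` and `r(wz) = r(z) + (r(w) ∸ ℓ(z))`.
Inserting `⟩` into `uv` either raises `ℓ` by one or lowers a positive `r` by one; under the
hypothesis of (i) both alternatives raise `ℓ((uv)z)` by one, under that of (ii) both lower
`r(z(uv))` by one.
-/

/-- The alphabet `Σ_k` of `k` types of opening (`op`) and closing (`cl`) parentheses. -/
inductive Par (k : ℕ) where
  | op : Fin k → Par k
  | cl : Fin k → Par k
deriving DecidableEq

namespace Par

/-- One step of the type-unaware reduction: `μ_u(zσ)` computed from `μ_u(z)`. -/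
def muUStep {k : ℕ} (z : List (Par k)) (σ : Par k) : List (Par k) :=
  match z.getLast?, σ with
  | some (op _), cl _ => z.dropLast
  | _, _ => z ++ [σ]

/-- The type-unaware reduction `μ_u`. -/
def muU {k : ℕ} (w : List (Par k)) : List (Par k) := w.foldl muUStep []

/-- One step of the type-aware reduction: cancellation requires matching types. -/
def muAStep {k : ℕ} (z : List (Par k)) (σ : Par k) : List (Par k) :=
  match z.getLast?, σ with
  | some (op i), cl j => if i = j then z.dropLast else z ++ [σ]
  | _, _ => z ++ [σ]

/-- The type-aware reduction `μ_a`. -/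
def muA {k : ℕ} (w : List (Par k)) : List (Par k) := w.foldl muAStep []

/-- Is the symbol a closing parenthesis? -/
def isCl {k : ℕ} : Par k → Bool
  | cl _ => true
  | _ => false

/-- Is the symbol an opening parenthesis? -/
def isOp {k : ℕ} : Par k → Bool
  | op _ => true
  | _ => false

/-- `ℓ(w)`: the number of unmatched closing parentheses of `w`. -/
def ell {k : ℕ} (w : List (Par k)) : ℕ := (muU w).countP isCl

/-- `r(w)`: the number of unmatched opening parentheses of `w`. -/
def rr {k : ℕ} (w : List (Par k)) : ℕ := (muU w).countP isOp

/-- The Dyck language `D_k`: smallest set containing `ε`, closed under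
concatenation, and containing `⟨_i w ⟩_i` whenever it contains `w`. -/
inductive Dyck {k : ℕ} : List (Par k) → Prop where
  | nil : Dyck []
  | append {u v : List (Par k)} : Dyck u → Dyck v → Dyck (u ++ v)
  | wrap {w : List (Par k)} (i : Fin k) : Dyck w → Dyck (op i :: w ++ [cl i])

end Par

namespace Par

section Step

variable {k : ℕ}

theorem muU_append_singleton (w : List (Par k)) (σ : Par k) :
    muU (w ++ [σ]) = muUStep (muU w) σ := by
  simp [muU, List.foldl_append]

theorem muUStep_op (z : List (Par k)) (i : Fin k) : muUStep z (op i) = z ++ [op i] := by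
  unfold muUStep
  split <;> simp_all

theorem muUStep_append_op_cl (z : List (Par k)) (i j : Fin k) :
    muUStep (z ++ [op j]) (cl i) = z := by
  simp [muUStep]

theorem muUStep_replicate_cl_cl (a : ℕ) (i j : Fin k) :
    muUStep (List.replicate a (cl j)) (cl i) = List.replicate a (cl j) ++ [cl i] := by
  unfold muUStep
  split
  · rename_i hlast _
    simp [List.getLast?_replicate] at hlast
  · rfl

end Step

theorem eq_op_zero_or_eq_cl_zero (σ : Par 1) : σ = op 0 ∨ σ = cl 0 := by
  cases σ with
  | op i => exact .inl (congrArg op (Subsingleton.elim i 0))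
  | cl i => exact .inr (congrArg cl (Subsingleton.elim i 0))

def reducedForm (a b : ℕ) : List (Par 1) := List.replicate a (cl 0) ++ List.replicate b (op 0)

theorem countP_isCl_reducedForm (a b : ℕ) : (reducedForm a b).countP isCl = a := by
  simp [reducedForm, List.countP_replicate, isCl]

theorem countP_isOp_reducedForm (a b : ℕ) : (reducedForm a b).countP isOp = b := by
  simp [reducedForm, List.countP_replicate, isOp]

theorem muUStep_reducedForm_op (a b : ℕ) :
    muUStep (reducedForm a b) (op 0) = reducedForm a (b + 1) := by
  simp [muUStep_op, reducedForm, List.replicate_succ']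

theorem muUStep_reducedForm_zero_cl (a : ℕ) :
    muUStep (reducedForm a 0) (cl 0) = reducedForm (a + 1) 0 := by
  simp [reducedForm, muUStep_replicate_cl_cl, List.replicate_succ']

theorem muUStep_reducedForm_succ_cl (a b : ℕ) :
    muUStep (reducedForm a (b + 1)) (cl 0) = reducedForm a b := by
  rw [reducedForm, List.replicate_succ', ← List.append_assoc, muUStep_append_op_cl, reducedForm]

theorem ell_eq_and_rr_eq_of_muU_eq {w : List (Par 1)} {a b : ℕ}
    (hw : muU w = reducedForm a b) : ell w = a ∧ rr w = b := by
  rw [ell, rr, hw]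
  exact ⟨countP_isCl_reducedForm a b, countP_isOp_reducedForm a b⟩

theorem exists_muU_eq_reducedForm (w : List (Par 1)) : ∃ a b, muU w = reducedForm a b := by
  induction w using List.reverseRecOn with
  | nil => exact ⟨0, 0, rfl⟩
  | append_singleton w σ ih =>
    obtain ⟨a, b, hw⟩ := ih
    rw [muU_append_singleton, hw]
    rcases eq_op_zero_or_eq_cl_zero σ with rfl | rfl
    · exact ⟨a, b + 1, muUStep_reducedForm_op a b⟩
    · rcases b with _ | b
      · exact ⟨a + 1, 0, muUStep_reducedForm_zero_cl a⟩
      · exact ⟨a, b, muUStep_reducedForm_succ_cl a b⟩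

theorem muU_eq_reducedForm (w : List (Par 1)) : muU w = reducedForm (ell w) (rr w) := by
  obtain ⟨a, b, hw⟩ := exists_muU_eq_reducedForm w
  obtain ⟨rfl, rfl⟩ := ell_eq_and_rr_eq_of_muU_eq hw
  exact hw

theorem ell_append_op_and_rr_append_op (w : List (Par 1)) :
    ell (w ++ [op 0]) = ell w ∧ rr (w ++ [op 0]) = rr w + 1 := by
  apply ell_eq_and_rr_eq_of_muU_eq
  rw [muU_append_singleton, muU_eq_reducedForm, muUStep_reducedForm_op]

theorem ell_append_cl_and_rr_append_cl (w : List (Par 1)) :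
    ell (w ++ [cl 0]) = ell w + (1 - rr w) ∧ rr (w ++ [cl 0]) = rr w - 1 := by
  have hmuU := muU_append_singleton w (cl 0)
  rw [muU_eq_reducedForm w] at hmuU
  rcases hr : rr w with _ | b
  · rw [hr, muUStep_reducedForm_zero_cl] at hmuU
    exact ell_eq_and_rr_eq_of_muU_eq hmuU
  · rw [hr, muUStep_reducedForm_succ_cl] at hmuU
    simpa using ell_eq_and_rr_eq_of_muU_eq hmuU

theorem ell_append_and_rr_append (w z : List (Par 1)) :
    ell (w ++ z) = ell w + (ell z - rr w) ∧ rr (w ++ z) = rr z + (rr w - ell z) := by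
  induction z using List.reverseRecOn with
  | nil => simp [ell, rr, muU]
  | append_singleton z σ ih =>
    rw [← List.append_assoc]
    rcases eq_op_zero_or_eq_cl_zero σ with rfl | rfl
    · have hwz := ell_append_op_and_rr_append_op (w ++ z)
      have hz := ell_append_op_and_rr_append_op z
      omega
    · have hwz := ell_append_cl_and_rr_append_cl (w ++ z)
      have hz := ell_append_cl_and_rr_append_cl z
      omega

theorem ell_append (w z : List (Par 1)) : ell (w ++ z) = ell w + (ell z - rr w) :=
  (ell_append_and_rr_append w z).1

theorem rr_append (w z : List (Par 1)) : rr (w ++ z) = rr z + (rr w - ell z) :=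
  (ell_append_and_rr_append w z).2

theorem ell_insert_cl_and_rr_insert_cl (u v : List (Par 1)) :
    (ell (u ++ cl 0 :: v) = ell (u ++ v) + 1 ∧ rr (u ++ cl 0 :: v) = rr (u ++ v)) ∨
      (ell (u ++ cl 0 :: v) = ell (u ++ v) ∧ rr (u ++ cl 0 :: v) = rr (u ++ v) - 1 ∧
        1 ≤ rr (u ++ v)) := by
  have hsplit : u ++ cl 0 :: v = (u ++ [cl 0]) ++ v := by simp
  have hu := ell_append_cl_and_rr_append_cl u
  rw [hsplit, ell_append _ v, rr_append _ v, ell_append u v, rr_append u v]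
  omega

end Par

/-- effect-inducing cases. (i) if `r(uv) ≤ ℓ(z)` then inserting a
closing parenthesis into the left part increases `ℓ` of the concatenation by one
and keeps `r`; (ii) if `r(z) > ℓ(uv)` then inserting it into the right part keeps
`ℓ` of the concatenation and decreases `r` by one. -/
theorem effect_inducing (u v z : List (Par 1)) :
    (Par.rr (u ++ v) ≤ Par.ell z →
      Par.ell ((u ++ Par.cl 0 :: v) ++ z) = Par.ell ((u ++ v) ++ z) + 1 ∧
      Par.rr ((u ++ Par.cl 0 :: v) ++ z) = Par.rr ((u ++ v) ++ z)) ∧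
    (Par.ell (u ++ v) < Par.rr z →
      Par.ell (z ++ (u ++ Par.cl 0 :: v)) = Par.ell (z ++ (u ++ v)) ∧
      Par.rr (z ++ (u ++ Par.cl 0 :: v)) = Par.rr (z ++ (u ++ v)) - 1 ∧
      1 ≤ Par.rr (z ++ (u ++ v))) := by
  have hinsert := Par.ell_insert_cl_and_rr_insert_cl u v
  generalize u ++ Par.cl 0 :: v = w' at *
  generalize u ++ v = w at *
  simp only [Par.ell_append, Par.rr_append]
  omega
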